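/- Let θ₁, θ₂ ∈ [0, π], φ ∈ [0, π/2), and r, r₁, r₂ > 0. Let x⁰, x¹, x² be points of the nonnegative quadrant of ℝ² satisfying x⁰ - x¹ = r₁(cos θ₁, sin θ₁) and x² - x⁰ = r₂(cos θ₂, sin θ₂). Let c = r(cos φ, sin φ), let g(x) = ⟨c, x⟩, and let d = {x ∈ ℝ² : g(x) = 0} be the kernel line of g. Then the two inequalities dist(x⁰, d) ≥ dist(x¹, d) and dist(x⁰, d) ≥ dist(x², d) hold if and only if θ₁ ≤ φ + π/2 ≤ θ₂. -/

import Mathlib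

/-!
The distance from `x` to the line `⟪c, ·⟫ = 0` is `|⟪c, x⟫| / ‖c‖`, and on the nonnegative
quadrant (where `c` also lies) `⟪c, x⟫ ≥ 0`. So the two inequalities say
`⟪c, x⁰ - x¹⟫ ≥ 0 ≥ ⟪c, x² - x⁰⟫`, i.e. `r r₁ cos (θ₁ - φ) ≥ 0 ≥ r r₂ cos (θ₂ - φ)`. Both angle
differences lie in `(-π/2, π]`, where the sign of the cosine is decided by comparison with `π/2`.
-/

open Real

open scoped RealInnerProductSpace

theorem Metric.infDist_setOf_inner_eq_zero {E : Type*} [NormedAddCommGroup E]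
    [InnerProductSpace ℝ E] {c : E} (hc : c ≠ 0) (x : E) :
    Metric.infDist x {y | ⟪c, y⟫ = 0} = |⟪c, x⟫| / ‖c‖ := by
  have hc' : 0 < ‖c‖ := norm_pos_iff.mpr hc
  apply le_antisymm
  · -- the foot of the perpendicular from `x`
    have hfoot : x - (⟪c, x⟫ / ‖c‖ ^ 2) • c ∈ {y | ⟪c, y⟫ = 0} := by
      simp only [Set.mem_ofPred_eq, inner_sub_right, inner_smul_right,
        real_inner_self_eq_norm_sq]
      field_simp
      ring
    refine (Metric.infDist_le_dist_of_mem hfoot).trans_eq ?_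
    rw [dist_eq_norm, sub_sub_cancel, norm_smul, Real.norm_eq_abs, abs_div, abs_pow, abs_norm]
    field_simp
  · refine (Metric.le_infDist ⟨0, by simp⟩).2 fun y (hy : ⟪c, y⟫ = 0) => ?_
    rw [div_le_iff₀ hc', dist_eq_norm, mul_comm]
    calc |⟪c, x⟫| = |⟪c, x - y⟫| := by rw [inner_sub_right, hy, sub_zero]
      _ ≤ ‖c‖ * ‖x - y‖ := abs_real_inner_le_norm c (x - y)

theorem inner_nonneg_of_forall_nonneg {ι : Type*} [Fintype ι] {c z : EuclideanSpace ℝ ι}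
    (hc : ∀ i, 0 ≤ c i) (hz : ∀ i, 0 ≤ z i) : 0 ≤ ⟪c, z⟫ := by
  rw [PiLp.inner_apply]
  exact Finset.sum_nonneg fun i _ => mul_nonneg (hz i) (by simpa using hc i)

theorem infDist_setOf_inner_eq_zero_le_iff {ι : Type*} [Fintype ι] {c z w : EuclideanSpace ℝ ι}
    (hc₀ : c ≠ 0) (hc : ∀ i, 0 ≤ c i) (hz : ∀ i, 0 ≤ z i) (hw : ∀ i, 0 ≤ w i) :
    Metric.infDist z {y | ⟪c, y⟫ = 0} ≤ Metric.infDist w {y | ⟪c, y⟫ = 0} ↔ ⟪c, z⟫ ≤ ⟪c, w⟫ := by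
  rw [Metric.infDist_setOf_inner_eq_zero hc₀, Metric.infDist_setOf_inner_eq_zero hc₀,
    abs_of_nonneg (inner_nonneg_of_forall_nonneg hc hz),
    abs_of_nonneg (inner_nonneg_of_forall_nonneg hc hw),
    div_le_div_iff_of_pos_right (norm_pos_iff.mpr hc₀)]

theorem EuclideanSpace.inner_polar {c v : EuclideanSpace ℝ (Fin 2)} {r ρ φ θ : ℝ}
    (hc : c 0 = r * cos φ ∧ c 1 = r * sin φ) (hv : v 0 = ρ * cos θ ∧ v 1 = ρ * sin θ) :
    ⟪c, v⟫ = r * ρ * cos (θ - φ) := by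
  simp only [PiLp.inner_apply, Fin.sum_univ_two, RCLike.inner_apply, conj_trivial, hc.1, hc.2,
    hv.1, hv.2, cos_sub]
  ring

theorem Real.cos_nonneg_iff_le_pi_div_two {t : ℝ} (h₀ : -(π / 2) ≤ t) (h₁ : t < π + π / 2) :
    0 ≤ cos t ↔ t ≤ π / 2 := by
  refine ⟨fun h => ?_, cos_nonneg_of_neg_pi_div_two_le_of_le h₀⟩
  by_contra! ht
  exact (cos_neg_of_pi_div_two_lt_of_lt ht h₁).not_ge h

theorem Real.cos_nonpos_iff_pi_div_two_le {t : ℝ} (h₀ : -(π / 2) < t) (h₁ : t ≤ π + π / 2) :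
    cos t ≤ 0 ↔ π / 2 ≤ t := by
  refine ⟨fun h => ?_, fun ht => cos_nonpos_of_pi_div_two_le_of_le ht h₁⟩
  by_contra! ht
  exact (cos_pos_of_mem_Ioo ⟨h₀, ht⟩).not_ge h

/-- Polar characterization: with `x⁰ - x¹ = r₁(cos θ₁, sin θ₁)`, `x² - x⁰ = r₂(cos θ₂, sin θ₂)`
points of the nonnegative quadrant, `c = r(cos φ, sin φ)`, `g(x) = ⟨c, x⟩` and `d` the kernel
line of `g`, the inequalities `dist(x⁰,d) ≥ dist(x¹,d)` and `dist(x⁰,d) ≥ dist(x²,d)` hold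
iff `θ₁ ≤ φ + π/2 ≤ θ₂`. -/
theorem stmt_3 (θ₁ θ₂ φ r r₁ r₂ : ℝ)
    (hθ₁ : θ₁ ∈ Set.Icc 0 π) (hθ₂ : θ₂ ∈ Set.Icc 0 π)
    (hφ : φ ∈ Set.Ico 0 (π / 2))
    (hr : 0 < r) (hr₁ : 0 < r₁) (hr₂ : 0 < r₂)
    (x₀ x₁ x₂ : EuclideanSpace ℝ (Fin 2))
    (hq₀ : 0 ≤ x₀ 0 ∧ 0 ≤ x₀ 1) (hq₁ : 0 ≤ x₁ 0 ∧ 0 ≤ x₁ 1) (hq₂ : 0 ≤ x₂ 0 ∧ 0 ≤ x₂ 1)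
    (h₁ : x₀ 0 - x₁ 0 = r₁ * cos θ₁ ∧ x₀ 1 - x₁ 1 = r₁ * sin θ₁)
    (h₂ : x₂ 0 - x₀ 0 = r₂ * cos θ₂ ∧ x₂ 1 - x₀ 1 = r₂ * sin θ₂)
    (c : EuclideanSpace ℝ (Fin 2)) (hc : c 0 = r * cos φ ∧ c 1 = r * sin φ)
    (g : EuclideanSpace ℝ (Fin 2) → ℝ)
    (hg : ∀ x, g x = inner ℝ c x)
    (d : Set (EuclideanSpace ℝ (Fin 2)))
    (hd : d = {x | g x = 0}) :
    (Metric.infDist x₁ d ≤ Metric.infDist x₀ d ∧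
        Metric.infDist x₂ d ≤ Metric.infDist x₀ d) ↔
      (θ₁ ≤ φ + π / 2 ∧ φ + π / 2 ≤ θ₂) := by
  obtain ⟨hφ₀, hφ₁⟩ := hφ
  have hc₀ : 0 < c 0 := hc.1 ▸ mul_pos hr (cos_pos_of_mem_Ioo ⟨by linarith [pi_pos], hφ₁⟩)
  have hc₁ : 0 ≤ c 1 := hc.2 ▸ mul_nonneg hr.le (sin_nonneg_of_nonneg_of_le_pi hφ₀ (by linarith))
  have hc_ne : c ≠ 0 := fun h => by simp [h] at hc₀
  have hc_nonneg : ∀ i, 0 ≤ c i := Fin.forall_fin_two.2 ⟨hc₀.le, hc₁⟩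
  have hd' : d = {y | ⟪c, y⟫ = 0} := by simp only [hd, hg]
  have e₁ : ⟪c, x₀ - x₁⟫ = r * r₁ * cos (θ₁ - φ) := EuclideanSpace.inner_polar hc (by simpa using h₁)
  have e₂ : ⟪c, x₂ - x₀⟫ = r * r₂ * cos (θ₂ - φ) := EuclideanSpace.inner_polar hc (by simpa using h₂)
  rw [hd', infDist_setOf_inner_eq_zero_le_iff hc_ne hc_nonneg (Fin.forall_fin_two.2 hq₁)
      (Fin.forall_fin_two.2 hq₀),
    infDist_setOf_inner_eq_zero_le_iff hc_ne hc_nonneg (Fin.forall_fin_two.2 hq₂)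
      (Fin.forall_fin_two.2 hq₀),
    ← sub_nonneg, ← sub_nonpos (a := ⟪c, x₂⟫), ← inner_sub_right, ← inner_sub_right, e₁, e₂,
    mul_nonneg_iff_of_pos_left (mul_pos hr hr₁), ← smul_eq_mul (r * r₂),
    smul_nonpos_iff_nonpos_of_pos_left (mul_pos hr hr₂),
    cos_nonneg_iff_le_pi_div_two (by linarith [hθ₁.1]) (by linarith [hθ₁.2, pi_pos]),
    cos_nonpos_iff_pi_div_two_le (by linarith [hθ₂.1]) (by linarith [hθ₂.2, pi_pos])]
  rw [sub_le_iff_le_add', le_sub_iff_add_le']
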